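/- Under the PART 3 setup, consider any subprofile R_{-i} ∈ ∏_{j≠i} 𝓡_j such that O_i(R_{-i}, 𝓡'_i) ≠ O_i(R_{-i}, 𝓡_i). Then for every agent j ≠ i and every preference R̂_j ∈ 𝓡_j, x ∈ O_i((R̂_j, R_{-{i,j}}), 𝓡'_i). -/

import Mathlib

/-- A preference is represented by its strict relation `P`, where `P a b` means
`a` is strictly preferred to `b`. -/
abbrev Pref (X : Type*) := X → X → Prop

/-- The universal domain: all strict linear orders (strict total orders) on `X`. -/
def univDomain (X : Type*) : Set (Pref X) := {P | IsStrictTotalOrder X P}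

/-- `S(𝓑)`: the set of ordered pairs of distinct alternatives that are fixed
(ranked the same way) throughout the domain `𝓑`. -/
def fixedPairs {X : Type*} (B : Set (Pref X)) : Set (X × X) :=
  {p | p.1 ≠ p.2 ∧ ∀ P ∈ B, P p.1 p.2}

/-- A preference domain is non-conditional if it consists exactly of the strict
linear orders respecting all of its fixed pairs. -/
def NonConditional {X : Type*} (B : Set (Pref X)) : Prop :=
  B = {P | P ∈ univDomain X ∧ ∀ p ∈ fixedPairs B, P p.1 p.2}

/-- `{x, y} ∈ S⁻¹(𝓑)`: the unordered pair `{x, y}` is a free pair of `𝓑`. -/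
def FreePair {X : Type*} (B : Set (Pref X)) (x y : X) : Prop :=
  x ≠ y ∧ (x, y) ∉ fixedPairs B ∧ (y, x) ∉ fixedPairs B

/-- The profile `R` lies in the product domain `∏ i, 𝓡 i`. -/
def InDomain {N X : Type*} (𝓡 : N → Set (Pref X)) (R : N → Pref X) : Prop :=
  ∀ i, R i ∈ 𝓡 i

/-- The range `r(f)` of a social choice rule `f` over the domain `𝓡`. -/
def scrRange {N X : Type*} (𝓡 : N → Set (Pref X)) (f : (N → Pref X) → X) : Set X :=
  {x | ∃ R, InDomain 𝓡 R ∧ f R = x}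

/-- Strategy-proofness of `f` on the product domain `𝓡`: no agent `i` can, at any
profile of the domain, obtain a strictly preferred outcome by misreporting. -/
def StrategyProof {N X : Type*} [DecidableEq N] (𝓡 : N → Set (Pref X))
    (f : (N → Pref X) → X) : Prop :=
  ∀ R, InDomain 𝓡 R → ∀ i, ∀ P' ∈ 𝓡 i, ¬ R i (f (Function.update R i P')) (f R)

/-- `f` is a dictatorship of agent `i` on the domain `𝓡`: at every profile of the
domain, `f` selects an outcome weakly preferred by `i` to every element of the range. -/
def Dictatorship {N X : Type*} (𝓡 : N → Set (Pref X)) (f : (N → Pref X) → X)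
    (i : N) : Prop :=
  ∀ R, InDomain 𝓡 R → ∀ x ∈ scrRange 𝓡 f, f R = x ∨ R i (f R) x

/-- `f` is non-dictatorial on the domain `𝓡`. -/
def NonDictatorial {N X : Type*} (𝓡 : N → Set (Pref X)) (f : (N → Pref X) → X) : Prop :=
  ∀ i, ¬ Dictatorship 𝓡 f i

/-- The option set `O_i(R_{-i}, 𝓑)` of agent `i` at the subprofile `R_{-i}`
relative to the set of preferences `𝓑`. -/
def optionSet {N X : Type*} [DecidableEq N] (f : (N → Pref X) → X) (i : N)
    (R : N → Pref X) (B : Set (Pref X)) : Set X :=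
  {x | ∃ P ∈ B, f (Function.update R i P) = x}
/-!
Strategy-proofness forces the following: if at some subprofile every preference of `𝓡'_i`
obtains `v` while some preference of `𝓡_i` obtains `u ≠ v`, then `(v, u)` is fixed in `𝓡'_i`
but not in `𝓡_i`, so `(v, u) = (x, y)`. Hence `x` is an option for `𝓡'_i` wherever `x` or `y`
is an option for `𝓡_i`, `z` is an option for `𝓡'_i` wherever it is one for `𝓡_i`, and `y` is an
option for `𝓡_i` at `R_{-i}`. If `x` were not an option for `𝓡'_i` once `j` reports `R̂_j`, the
only option there would be `z`. Then `R_j` ranks `x` and `y` above `z` while `R̂_j` ranks `z`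
above both, and since `𝓡_j` is non-conditional it contains a preference `x ≻ z ≻ y` (if `𝓡_j`
fixes `x` over `y`) or `y ≻ z ≻ x` (otherwise); reporting it, `j` or `i` can manipulate.
-/

open Function

section LinearExtension

variable {α : Type*} {r : α → α → Prop}

theorem rel_of_not_rel_of_ne [IsStrictTotalOrder α r] {a b : α} (hab : a ≠ b) (h : ¬ r b a) :
    r a b := by
  by_contra h'
  exact hab (Std.Trichotomous.trichotomous a b h' h)

theorem IsLinearOrder.isStrictTotalOrder_and_ne [IsLinearOrder α r] :
    IsStrictTotalOrder α (fun a b => r a b ∧ a ≠ b) where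
  trichotomous a b hab hba := by
    by_contra hne
    rcases total_of r a b with h | h
    exacts [hab ⟨h, hne⟩, hba ⟨h, Ne.symm hne⟩]
  irrefl a h := h.2 rfl
  trans a b c := fun ⟨hab, hne⟩ ⟨hbc, _⟩ =>
    ⟨trans_of r hab hbc, by rintro rfl; exact hne (antisymm_of r hab hbc)⟩

theorem IsPartialOrder.adjoin_pair [IsPartialOrder α r] {a b : α} (hba : ¬ r b a) :
    IsPartialOrder α (fun u v => r u v ∨ (r u a ∧ r b v)) where
  refl u := .inl (refl_of r u)
  trans u v w := by
    rintro (huv | ⟨hua, hbv⟩) (hvw | ⟨hva, hbw⟩)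
    · exact .inl (trans_of r huv hvw)
    · exact .inr ⟨trans_of r huv hva, hbw⟩
    · exact .inr ⟨hua, trans_of r hbv hvw⟩
    · exact absurd (trans_of r hbv hva) hba
  antisymm u v := by
    rintro (huv | ⟨hua, hbv⟩) (hvu | ⟨hva, hbu⟩)
    · exact antisymm_of r huv hvu
    · exact absurd (trans_of r (trans_of r hbu huv) hva) hba
    · exact absurd (trans_of r (trans_of r hbv hvu) hua) hba
    · exact absurd (trans_of r hbv hva) hba

theorem exists_isLinearOrder_chain [IsPartialOrder α r] {a b c : α} (hba : ¬ r b a)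
    (hcb : ¬ r c b) (hca : ¬ r c a) : ∃ s, IsLinearOrder α s ∧ r ≤ s ∧ s a b ∧ s b c := by
  let r₁ : α → α → Prop := fun u v => r u v ∨ (r u a ∧ r b v)
  have : IsPartialOrder α r₁ := IsPartialOrder.adjoin_pair hba
  have hcb₁ : ¬ r₁ c b := by
    rintro (h | ⟨h, -⟩)
    exacts [hcb h, hca h]
  have : IsPartialOrder α (fun u v => r₁ u v ∨ (r₁ u b ∧ r₁ c v)) :=
    IsPartialOrder.adjoin_pair hcb₁
  obtain ⟨s, hs, hle⟩ := extend_partialOrder (fun u v => r₁ u v ∨ (r₁ u b ∧ r₁ c v))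
  exact ⟨s, hs, fun u v huv => hle u v (.inl (.inl huv)),
    hle a b (.inl (.inr ⟨refl_of r a, refl_of r b⟩)), hle b c (.inr ⟨refl_of r₁ b, refl_of r₁ c⟩)⟩

end LinearExtension

section Domains

variable {X : Type*} {D : Set (Pref X)}

theorem NonConditional.isStrictTotalOrder (hD : NonConditional D) {P : Pref X} (hP : P ∈ D) :
    IsStrictTotalOrder X P := by
  rw [hD] at hP
  exact hP.1

theorem exists_mem_rel_of_not_mem_fixedPairs (hD : ∀ P ∈ D, IsStrictTotalOrder X P) {a b : X}
    (hab : a ≠ b) (h : (a, b) ∉ fixedPairs D) : ∃ P ∈ D, P b a := by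
  by_contra! hD'
  refine h ⟨hab, fun P hP => ?_⟩
  have := hD P hP
  exact rel_of_not_rel_of_ne hab (hD' P hP)

def unanimousLE (D : Set (Pref X)) (u v : X) : Prop :=
  ∀ P ∈ D, u = v ∨ P u v

theorem isPartialOrder_unanimousLE (hD : ∀ P ∈ D, IsStrictOrder X P) {P₀ : Pref X}
    (hP₀ : P₀ ∈ D) : IsPartialOrder X (unanimousLE D) where
  refl _ _ _ := .inl rfl
  trans u v w huv hvw P hP := by
    have := hD P hP
    rcases huv P hP with rfl | huv
    · exact hvw P hP
    rcases hvw P hP with rfl | hvw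
    · exact .inr huv
    exact .inr (trans_of P huv hvw)
  antisymm u v huv hvu := by
    have := hD P₀ hP₀
    rcases huv P₀ hP₀ with h | huv
    · exact h
    rcases hvu P₀ hP₀ with h | hvu
    · exact h.symm
    exact absurd hvu (asymm_of P₀ huv)

theorem mem_fixedPairs_of_unanimousLE {u v : X} (huv : u ≠ v) (h : unanimousLE D u v) :
    (u, v) ∈ fixedPairs D :=
  ⟨huv, fun P hP => (h P hP).resolve_left huv⟩

theorem NonConditional.exists_mem_chain (hD : NonConditional D) {P₀ : Pref X} (hP₀ : P₀ ∈ D)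
    {a b c : X} (hab : a ≠ b) (hbc : b ≠ c) (hac : a ≠ c) (hba : (b, a) ∉ fixedPairs D)
    (hcb : (c, b) ∉ fixedPairs D) (hca : (c, a) ∉ fixedPairs D) :
    ∃ P ∈ D, P a b ∧ P b c ∧ P a c := by
  have := isPartialOrder_unanimousLE (fun P hP => (hD.isStrictTotalOrder hP).toIsStrictOrder) hP₀
  obtain ⟨s, hs, hle, hsab, hsbc⟩ := exists_isLinearOrder_chain
    (mt (mem_fixedPairs_of_unanimousLE hab.symm) hba)
    (mt (mem_fixedPairs_of_unanimousLE hbc.symm) hcb)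
    (mt (mem_fixedPairs_of_unanimousLE hac.symm) hca)
  have hsto := hs.isStrictTotalOrder_and_ne
  refine ⟨fun u v => s u v ∧ u ≠ v, ?_, ⟨hsab, hab⟩, ⟨hsbc, hbc⟩, ⟨trans_of s hsab hsbc, hac⟩⟩
  rw [hD]
  exact ⟨hsto, fun p hp => ⟨hle _ _ fun P hP => .inr (hp.2 P hP), hp.1⟩⟩

end Domains

section StrategyProof

variable {N X : Type*} [DecidableEq N] {𝓡 : N → Set (Pref X)} {f : (N → Pref X) → X}
  {R : N → Pref X} {i j : N}

theorem inDomain_update (hR : ∀ k, k ≠ i → R k ∈ 𝓡 k) {P : Pref X} (hP : P ∈ 𝓡 i) :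
    InDomain 𝓡 (update R i P) := by
  intro k
  rcases eq_or_ne k i with rfl | hk
  · simpa using hP
  · simpa [hk] using hR k hk

theorem update_mem_of_ne (hR : ∀ k, k ≠ i → R k ∈ 𝓡 k) {Q : Pref X} (hQ : Q ∈ 𝓡 j) :
    ∀ k, k ≠ i → update R j Q k ∈ 𝓡 k := by
  intro k hk
  rcases eq_or_ne k j with rfl | hkj
  · simpa using hQ
  · simpa [hkj] using hR k hk

theorem update_mem_scrRange (hR : ∀ k, k ≠ i → R k ∈ 𝓡 k) {P : Pref X} (hP : P ∈ 𝓡 i) :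
    f (update R i P) ∈ scrRange 𝓡 f :=
  ⟨_, inDomain_update hR hP, rfl⟩

theorem StrategyProof.not_rel_update (hSP : StrategyProof 𝓡 f) (hR : ∀ k, k ≠ i → R k ∈ 𝓡 k)
    {P Q : Pref X} (hP : P ∈ 𝓡 i) (hQ : Q ∈ 𝓡 i) :
    ¬ P (f (update R i Q)) (f (update R i P)) := by
  simpa using hSP _ (inDomain_update hR hP) i Q hQ

theorem StrategyProof.not_rel_update_update (hSP : StrategyProof 𝓡 f)
    (hR : ∀ k, k ≠ i → R k ∈ 𝓡 k) (hji : j ≠ i) {P Q Q' : Pref X} (hP : P ∈ 𝓡 i)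
    (hQ : Q ∈ 𝓡 j) (hQ' : Q' ∈ 𝓡 j) :
    ¬ Q (f (update (update R j Q') i P)) (f (update (update R j Q) i P)) := by
  have hRP : ∀ k, k ≠ j → update R i P k ∈ 𝓡 k := by
    intro k hk
    rcases eq_or_ne k i with rfl | hki
    · simpa using hP
    · simpa [hki] using hR k hki
  simpa only [update_comm hji.symm] using hSP.not_rel_update hRP hQ hQ'

theorem StrategyProof.freePair_of_update_update (hSP : StrategyProof 𝓡 f)
    (hR : ∀ k, k ≠ i → R k ∈ 𝓡 k) (hji : j ≠ i) {P Q Q' : Pref X} (hP : P ∈ 𝓡 i)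
    (hQ : Q ∈ 𝓡 j) (hQ' : Q' ∈ 𝓡 j) {u v : X} (hu : f (update (update R j Q) i P) = u)
    (hv : f (update (update R j Q') i P) = v) (huv : u ≠ v) : FreePair (𝓡 j) u v := by
  refine ⟨huv, fun hfix => ?_, fun hfix => ?_⟩
  · have hsp := hSP.not_rel_update_update hR hji hP hQ' hQ
    rw [hu, hv] at hsp
    exact hsp (hfix.2 Q' hQ')
  · have hsp := hSP.not_rel_update_update hR hji hP hQ hQ'
    rw [hu, hv] at hsp
    exact hsp (hfix.2 Q hQ)

theorem StrategyProof.mem_fixedPairs_diff (hSP : StrategyProof 𝓡 f) {B : Set (Pref X)}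
    (hB : B ⊆ 𝓡 i) (hBsto : ∀ P ∈ B, IsStrictTotalOrder X P) {P₀ : Pref X} (hP₀ : P₀ ∈ B)
    (hR : ∀ k, k ≠ i → R k ∈ 𝓡 k) {P : Pref X} (hP : P ∈ 𝓡 i) {u v : X} (hvu : v ≠ u)
    (hu : f (update R i P) = u) (hv : ∀ P' ∈ B, f (update R i P') = v) :
    (v, u) ∈ fixedPairs B \ fixedPairs (𝓡 i) := by
  refine ⟨⟨hvu, fun P' hP' => ?_⟩, fun hfix => ?_⟩
  · have := hBsto P' hP'
    have hsp := hSP.not_rel_update hR (hB hP') hP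
    rw [hu, hv P' hP'] at hsp
    exact rel_of_not_rel_of_ne hvu hsp
  · have hsp := hSP.not_rel_update hR hP (hB hP₀)
    rw [hu, hv P₀ hP₀] at hsp
    exact hsp (hfix.2 P hP)

end StrategyProof

/-- The PART 3 setting of the induction step for agent `i`. -/
structure InductionPart3 {N X : Type*} [DecidableEq N] (𝓡 𝓡' : N → Set (Pref X)) (i : N)
    (x y z : X) (f : (N → Pref X) → X) : Prop where
  agree : ∀ j, j ≠ i → 𝓡' j = 𝓡 j
  nonConditional : ∀ j, NonConditional (𝓡 j)
  subset : 𝓡' i ⊆ 𝓡 i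
  x_ne_y : x ≠ y
  fixedPairs_eq : fixedPairs (𝓡 i) = fixedPairs (𝓡' i) \ {(x, y)}
  strategyProof : StrategyProof 𝓡 f
  z_ne_x : z ≠ x
  z_ne_y : z ≠ y
  range' : scrRange 𝓡' f = {x, z}
  range : scrRange 𝓡 f = {x, y, z}

namespace InductionPart3

variable {N X : Type*} [DecidableEq N] {𝓡 𝓡' : N → Set (Pref X)} {i j : N} {x y z : X}
  {f : (N → Pref X) → X} {R : N → Pref X}

theorem isStrictTotalOrder (h : InductionPart3 𝓡 𝓡' i x y z f) {P : Pref X} (hP : P ∈ 𝓡 i) :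
    IsStrictTotalOrder X P :=
  (h.nonConditional i).isStrictTotalOrder hP

theorem nonempty (h : InductionPart3 𝓡 𝓡' i x y z f) : (𝓡' i).Nonempty := by
  obtain ⟨R, hR, -⟩ : x ∈ scrRange 𝓡' f := h.range' ▸ Set.mem_insert x {z}
  exact ⟨R i, hR i⟩

theorem eq_or_eq_or_eq (h : InductionPart3 𝓡 𝓡' i x y z f) (hR : ∀ k, k ≠ i → R k ∈ 𝓡 k)
    {P : Pref X} (hP : P ∈ 𝓡 i) :
    f (update R i P) = x ∨ f (update R i P) = y ∨ f (update R i P) = z := by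
  simpa only [h.range, Set.mem_insert_iff, Set.mem_singleton_iff] using
    update_mem_scrRange (f := f) hR hP

theorem eq_or_eq' (h : InductionPart3 𝓡 𝓡' i x y z f) (hR : ∀ k, k ≠ i → R k ∈ 𝓡 k)
    {P : Pref X} (hP : P ∈ 𝓡' i) : f (update R i P) = x ∨ f (update R i P) = z := by
  have hR' : ∀ k, k ≠ i → R k ∈ 𝓡' k := fun k hk => (h.agree k hk).symm ▸ hR k hk
  simpa only [h.range', Set.mem_insert_iff, Set.mem_singleton_iff] using
    update_mem_scrRange (f := f) hR' hP

theorem eq_x_and_eq_y (h : InductionPart3 𝓡 𝓡' i x y z f) (hR : ∀ k, k ≠ i → R k ∈ 𝓡 k)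
    {P : Pref X} (hP : P ∈ 𝓡 i) {u v : X} (hvu : v ≠ u) (hu : f (update R i P) = u)
    (hv : ∀ P' ∈ 𝓡' i, f (update R i P') = v) : v = x ∧ u = y := by
  obtain ⟨P₀, hP₀⟩ := h.nonempty
  have hmem := h.strategyProof.mem_fixedPairs_diff h.subset
    (fun P' hP' => h.isStrictTotalOrder (h.subset hP')) hP₀ hR hP hvu hu hv
  have hxy : (v, u) = (x, y) := by
    by_contra hne
    exact hmem.2 (h.fixedPairs_eq ▸ ⟨hmem.1, hne⟩)
  exact Prod.mk.inj hxy

theorem x_mem_optionSet' (h : InductionPart3 𝓡 𝓡' i x y z f) (hR : ∀ k, k ≠ i → R k ∈ 𝓡 k)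
    {w : X} (hw : w ∈ optionSet f i R (𝓡 i)) (hwz : w ≠ z) : x ∈ optionSet f i R (𝓡' i) := by
  obtain ⟨P, hP, hPw⟩ := hw
  by_contra hx
  have hz : ∀ P' ∈ 𝓡' i, f (update R i P') = z := fun P' hP' =>
    (h.eq_or_eq' hR hP').resolve_left fun e => hx ⟨P', hP', e⟩
  exact h.z_ne_x (h.eq_x_and_eq_y hR hP hwz.symm hPw hz).1

theorem z_mem_optionSet' (h : InductionPart3 𝓡 𝓡' i x y z f) (hR : ∀ k, k ≠ i → R k ∈ 𝓡 k)
    (hz : z ∈ optionSet f i R (𝓡 i)) : z ∈ optionSet f i R (𝓡' i) := by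
  obtain ⟨P, hP, hPz⟩ := hz
  by_contra hz'
  have hx : ∀ P' ∈ 𝓡' i, f (update R i P') = x := fun P' hP' =>
    (h.eq_or_eq' hR hP').resolve_right fun e => hz' ⟨P', hP', e⟩
  exact h.z_ne_y (h.eq_x_and_eq_y hR hP h.z_ne_x.symm hPz hx).2

theorem y_mem_optionSet (h : InductionPart3 𝓡 𝓡' i x y z f) (hR : ∀ k, k ≠ i → R k ∈ 𝓡 k)
    (hne : optionSet f i R (𝓡' i) ≠ optionSet f i R (𝓡 i)) : y ∈ optionSet f i R (𝓡 i) := by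
  by_contra hy
  refine hne (Set.Subset.antisymm (fun w ⟨P, hP, hw⟩ => ⟨P, h.subset hP, hw⟩) ?_)
  rintro w ⟨P, hP, rfl⟩
  rcases h.eq_or_eq_or_eq hR hP with e | e | e
  · exact e ▸ h.x_mem_optionSet' hR ⟨P, hP, e⟩ h.z_ne_x.symm
  · exact absurd ⟨P, hP, e⟩ hy
  · exact e ▸ h.z_mem_optionSet' hR ⟨P, hP, e⟩

theorem eq_z_of_x_not_mem_optionSet' (h : InductionPart3 𝓡 𝓡' i x y z f)
    (hR : ∀ k, k ≠ i → R k ∈ 𝓡 k)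
    (hx : x ∉ optionSet f i R (𝓡' i)) {P : Pref X} (hP : P ∈ 𝓡 i) : f (update R i P) = z := by
  by_contra hPz
  exact hx (h.x_mem_optionSet' hR ⟨P, hP, rfl⟩ hPz)

theorem eq_y_of_rel (h : InductionPart3 𝓡 𝓡' i x y z f) (hR : ∀ k, k ≠ i → R k ∈ 𝓡 k)
    (hy : y ∈ optionSet f i R (𝓡 i)) {P : Pref X} (hP : P ∈ 𝓡 i) (hyx : P y x) (hyz : P y z) :
    f (update R i P) = y := by
  obtain ⟨Py, hPy, hfy⟩ := hy
  have hsp := h.strategyProof.not_rel_update hR hP hPy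
  rw [hfy] at hsp
  rcases h.eq_or_eq_or_eq hR hP with e | e | e
  · exact absurd (e ▸ hyx) hsp
  · exact e
  · exact absurd (e ▸ hyz) hsp

theorem false_of_shift (h : InductionPart3 𝓡 𝓡' i x y z f) (hR : ∀ k, k ≠ i → R k ∈ 𝓡 k)
    (hy : y ∈ optionSet f i R (𝓡 i)) (hx : x ∈ optionSet f i R (𝓡' i)) {D : N → Pref X}
    (hD : ∀ k, k ≠ i → D k ∈ 𝓡 k)
    (hDx : ∀ P ∈ 𝓡' i, f (update R i P) = x → f (update D i P) = x)
    (hDz : ∀ P ∈ 𝓡 i, f (update R i P) = y → f (update D i P) = z) : False := by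
  have hSP := h.strategyProof
  obtain ⟨Py, hPy, hfy⟩ := id hy
  obtain ⟨Px, hPx, hfx⟩ := hx
  have hPy_xz : ¬ Py x z := by
    simpa only [hDx Px hPx hfx, hDz Py hPy hfy] using hSP.not_rel_update hD hPy (h.subset hPx)
  by_cases hxz : (x, z) ∈ fixedPairs (𝓡' i)
  · have hxz' : (x, z) ∈ fixedPairs (𝓡 i) :=
      h.fixedPairs_eq ▸ ⟨hxz, fun e => h.z_ne_y (Prod.mk.inj e).2⟩
    exact hPy_xz (hxz'.2 Py hPy)
  obtain ⟨P, hP, hzx⟩ := exists_mem_rel_of_not_mem_fixedPairs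
    (fun P hP => h.isStrictTotalOrder (h.subset hP)) h.z_ne_x.symm hxz
  rcases h.eq_or_eq' hR hP with e | e
  · have hsp := hSP.not_rel_update hD (h.subset hP) hPy
    rw [hDx P hP e, hDz Py hPy hfy] at hsp
    exact hsp hzx
  -- `z` is an option at `R`, so a preference `y ≻ x ≻ z` exists; it chooses `y` at `R`, hence
  -- `z` at `D`, although `x` is available there
  have hzx' : (z, x) ∉ fixedPairs (𝓡 i) := fun hfix => by
    have hsp := hSP.not_rel_update hR (h.subset hPx) (h.subset hP)
    rw [e, hfx] at hsp
    exact hsp (hfix.2 Px (h.subset hPx))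
  have hzy : (z, y) ∉ fixedPairs (𝓡 i) := fun hfix => by
    have hsp := hSP.not_rel_update hR hPy (h.subset hP)
    rw [e, hfy] at hsp
    exact hsp (hfix.2 Py hPy)
  have hxy : (x, y) ∉ fixedPairs (𝓡 i) := by
    rw [h.fixedPairs_eq]
    exact fun hm => hm.2 rfl
  obtain ⟨Q, hQ, hyx, hxz, hyz⟩ := (h.nonConditional i).exists_mem_chain hPy h.x_ne_y.symm
    h.z_ne_x.symm h.z_ne_y.symm hxy hzx' hzy
  have hsp := hSP.not_rel_update hD hQ (h.subset hPx)
  rw [hDx Px hPx hfx, hDz Q hQ (h.eq_y_of_rel hR hy hQ hyx hyz)] at hsp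
  exact hsp hxz

theorem false_of_mem_fixedPairs (h : InductionPart3 𝓡 𝓡' i x y z f)
    (hR : ∀ k, k ≠ i → R k ∈ 𝓡 k) (hy : y ∈ optionSet f i R (𝓡 i))
    (hx : x ∈ optionSet f i R (𝓡' i)) (hj : j ≠ i) {Rhat : Pref X} (hRhat : Rhat ∈ 𝓡 j)
    (hRhatz : ∀ P ∈ 𝓡 i, f (update (update R j Rhat) i P) = z) (hxz : FreePair (𝓡 j) x z)
    (hyz : FreePair (𝓡 j) y z) (hxy : (x, y) ∈ fixedPairs (𝓡 j)) : False := by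
  have hSP := h.strategyProof
  have hRj := hR j hj
  have := (h.nonConditional j).isStrictTotalOrder hRj
  have hyx : (y, x) ∉ fixedPairs (𝓡 j) := fun hyx => asymm_of (R j) (hxy.2 _ hRj) (hyx.2 _ hRj)
  obtain ⟨Q, hQ, hxzQ, hzyQ, -⟩ := (h.nonConditional j).exists_mem_chain hRj h.z_ne_x.symm
    h.z_ne_y h.x_ne_y hxz.2.2 hyz.2.1 hyx
  refine h.false_of_shift hR hy hx (update_mem_of_ne hR hQ) (fun P hP hPx => ?_)
    (fun P hP hPy => ?_)
  · have hsp := hSP.not_rel_update_update hR hj (h.subset hP) hQ hRj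
    rw [update_eq_self, hPx] at hsp
    exact (h.eq_or_eq' (update_mem_of_ne hR hQ) hP).resolve_right fun e => hsp (e ▸ hxzQ)
  · have hsp := hSP.not_rel_update_update hR hj hP hRj hQ
    have hsp' := hSP.not_rel_update_update hR hj hP hQ hRhat
    rw [update_eq_self, hPy] at hsp
    rw [hRhatz P hP] at hsp'
    rcases h.eq_or_eq_or_eq (update_mem_of_ne hR hQ) hP with e | e | e
    · exact absurd (e ▸ hxy.2 _ hRj) hsp
    · exact absurd (e ▸ hzyQ) hsp'
    · exact e

theorem false_of_not_mem_fixedPairs (h : InductionPart3 𝓡 𝓡' i x y z f)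
    (hR : ∀ k, k ≠ i → R k ∈ 𝓡 k) (hy : y ∈ optionSet f i R (𝓡 i)) (hj : j ≠ i) {Rhat : Pref X}
    (hRhat : Rhat ∈ 𝓡 j) (hRhatz : ∀ P ∈ 𝓡 i, f (update (update R j Rhat) i P) = z)
    (hxz : FreePair (𝓡 j) x z) (hyz : FreePair (𝓡 j) y z)
    (hxy : (x, y) ∉ fixedPairs (𝓡 j)) : False := by
  have hSP := h.strategyProof
  have hRj := hR j hj
  obtain ⟨Py, hPy, hfy⟩ := hy
  obtain ⟨Q, hQ, hyzQ, hzxQ, hyxQ⟩ := (h.nonConditional j).exists_mem_chain hRj h.z_ne_y.symm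
    h.z_ne_x h.x_ne_y.symm hyz.2.2 hxz.2.1 hxy
  have hQy : f (update (update R j Q) i Py) = y := by
    have hsp := hSP.not_rel_update_update hR hj hPy hQ hRj
    rw [update_eq_self, hfy] at hsp
    rcases h.eq_or_eq_or_eq (update_mem_of_ne hR hQ) hPy with e | e | e
    · exact absurd (e ▸ hyxQ) hsp
    · exact e
    · exact absurd (e ▸ hyzQ) hsp
  obtain ⟨P, hP, hPx⟩ := h.x_mem_optionSet' (update_mem_of_ne hR hQ) ⟨Py, hPy, hQy⟩ h.z_ne_y.symm
  have hsp := hSP.not_rel_update_update hR hj (h.subset hP) hQ hRhat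
  rw [hRhatz P (h.subset hP), hPx] at hsp
  exact hsp hzxQ

theorem x_mem_optionSet'_update (h : InductionPart3 𝓡 𝓡' i x y z f)
    (hR : ∀ k, k ≠ i → R k ∈ 𝓡 k) (hy : y ∈ optionSet f i R (𝓡 i)) (hj : j ≠ i) {Rhat : Pref X}
    (hRhat : Rhat ∈ 𝓡 j) : x ∈ optionSet f i (update R j Rhat) (𝓡' i) := by
  by_contra hx
  have hRhatz := fun P (hP : P ∈ 𝓡 i) =>
    h.eq_z_of_x_not_mem_optionSet' (update_mem_of_ne hR hRhat) hx hP
  have hxR := h.x_mem_optionSet' hR hy h.z_ne_y.symm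
  obtain ⟨Py, hPy, hfy⟩ := id hy
  obtain ⟨Px, hPx, hfx⟩ := id hxR
  have hfree : ∀ {P w}, P ∈ 𝓡 i → f (update R i P) = w → w ≠ z → FreePair (𝓡 j) w z :=
    fun hP hw hwz => h.strategyProof.freePair_of_update_update hR hj hP (hR j hj) hRhat
      (by rwa [update_eq_self]) (hRhatz _ hP) hwz
  have hxz := hfree (h.subset hPx) hfx h.z_ne_x.symm
  have hyz := hfree hPy hfy h.z_ne_y.symm
  by_cases hxy : (x, y) ∈ fixedPairs (𝓡 j)
  · exact h.false_of_mem_fixedPairs hR hy hxR hj hRhat hRhatz hxz hyz hxy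
  · exact h.false_of_not_mem_fixedPairs hR hy hj hRhat hRhatz hxz hyz hxy

end InductionPart3

theorem statement10_general {N X : Type*} [DecidableEq N]
    (i : N) (𝓡 𝓡' : N → Set (Pref X))
    (hAgree : ∀ j, j ≠ i → 𝓡' j = 𝓡 j)
    (hNC : ∀ j, NonConditional (𝓡 j))
    (hss : 𝓡' i ⊂ 𝓡 i) (x y : X)
    (hxy : (x, y) ∈ fixedPairs (𝓡' i))
    (hS : fixedPairs (𝓡 i) = fixedPairs (𝓡' i) \ {(x, y)})
    (f : (N → Pref X) → X) (hSP : StrategyProof 𝓡 f)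
    (z : X) (hzx : z ≠ x) (hzy : z ≠ y)
    (hrange' : scrRange 𝓡' f = {x, z})
    (hrange : scrRange 𝓡 f = {x, y, z}) :
    ∀ R : N → Pref X, (∀ j, j ≠ i → R j ∈ 𝓡 j) →
      optionSet f i R (𝓡' i) ≠ optionSet f i R (𝓡 i) →
      ∀ j, j ≠ i → ∀ Rhat ∈ 𝓡 j,
        x ∈ optionSet f i (Function.update R j Rhat) (𝓡' i) := by
  intro R hR hne j hj Rhat hRhat
  have h : InductionPart3 𝓡 𝓡' i x y z f :=
    ⟨hAgree, hNC, hss.subset, hxy.1, hS, hSP, hzx, hzy, hrange', hrange⟩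
  exact h.x_mem_optionSet'_update hR (h.y_mem_optionSet hR hne) hj hRhat

theorem statement10 {N X : Type*} [Fintype N] [Nonempty N] [Fintype X] [DecidableEq N]
    (i : N) (𝓡 𝓡' : N → Set (Pref X))
    (hAgree : ∀ j, j ≠ i → 𝓡' j = 𝓡 j)
    (hNC : ∀ j, NonConditional (𝓡 j)) (hNC' : NonConditional (𝓡' i))
    (hss : 𝓡' i ⊂ 𝓡 i) (x y : X)
    (hxy : (x, y) ∈ fixedPairs (𝓡' i))
    (hS : fixedPairs (𝓡 i) = fixedPairs (𝓡' i) \ {(x, y)})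
    (hnoz : ¬ ∃ z, (x, z) ∈ fixedPairs (𝓡' i) ∧ (z, y) ∈ fixedPairs (𝓡' i))
    (f : (N → Pref X) → X) (hSP : StrategyProof 𝓡 f)
    (z : X) (hzx : z ≠ x) (hzy : z ≠ y)
    (hrange' : scrRange 𝓡' f = {x, z})
    (hrange : scrRange 𝓡 f = {x, y, z}) :
    ∀ R : N → Pref X, (∀ j, j ≠ i → R j ∈ 𝓡 j) →
      optionSet f i R (𝓡' i) ≠ optionSet f i R (𝓡 i) →
      ∀ j, j ≠ i → ∀ Rhat ∈ 𝓡 j,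
        x ∈ optionSet f i (Function.update R j Rhat) (𝓡' i) :=
  statement10_general i 𝓡 𝓡' hAgree hNC hss x y hxy hS f hSP z hzx hzy hrange' hrange
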